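/- arXiv:2302.10394 — 9 statements merged into one kernel-verified Lean document; each statement's English description precedes it below -/
import Mathlib

section
/- For every real number r in (1,∞) there exists a constant c_r > 0 such that for all vectors a, b in ℝ^N, the inequality ⟨‖a‖^{r-2} a − ‖b‖^{r-2} b, a − b⟩ ≥ c_r (‖a‖ + ‖b‖)^{r-2} ‖a − b‖² ≥ 0 holds. -/
/-!
Write `α = ‖a‖`, `β = ‖b‖`, `t = ⟪a, b⟫`. Both sides of the inequality are affine in `t`, which
ranges over `[-αβ, αβ]` by Cauchy–Schwarz, so it suffices to check the two endpoints, where `b` is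
a nonnegative or nonpositive multiple of `a`. With `β ≤ α`, the antiparallel endpoint reduces to
`2^(1-r) (α + β)^(r-1) ≤ α^(r-1) + β^(r-1)`, and the parallel one to the lower bound
`α^(r-1) - β^(r-1) ≥ c (α + β)^(r-2) (α - β)`, which follows from the mean value theorem on
`[(α + β)/2, α]`: there the derivative `(r - 1) ξ^(r-2)` is comparable to `(α + β)^(r-2)`
whatever the sign of `r - 2`.
-/

open Real InnerProductSpace

lemma rpow_sub_two_mul_self {r x : ℝ} (hr : 1 < r) (hx : 0 ≤ x) :
    x ^ (r - 2) * x = x ^ (r - 1) := by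
  rw [← rpow_add_one' hx (by linarith)]
  ring_nf

lemma min_two_rpow_neg_mul_rpow_le {q s ξ : ℝ} (hξ : 0 < ξ) (hsξ : s / 2 ≤ ξ) (hξs : ξ ≤ s) :
    min (2 ^ (-q)) 1 * s ^ q ≤ ξ ^ q := by
  have hs : 0 ≤ s := by linarith
  rcases le_total 0 q with hq | hq
  · calc min (2 ^ (-q)) 1 * s ^ q ≤ 2 ^ (-q) * s ^ q := by gcongr; exact min_le_left _ _
      _ = (s / 2) ^ q := by rw [div_rpow hs zero_le_two, rpow_neg zero_le_two]; ring
      _ ≤ ξ ^ q := rpow_le_rpow (by positivity) hsξ hq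
  · calc min (2 ^ (-q)) 1 * s ^ q ≤ 1 * s ^ q := by gcongr; exact min_le_right _ _
      _ ≤ ξ ^ q := by rw [one_mul]; exact rpow_le_rpow_of_nonpos hξ hξs hq

lemma mul_add_rpow_mul_sub_le_rpow_sub_rpow {r α β : ℝ} (hr : 1 < r) (hβ : 0 ≤ β) (hβα : β ≤ α) :
    (r - 1) / 2 * min (2 ^ (-(r - 2))) 1 * (α + β) ^ (r - 2) * (α - β) ≤
      α ^ (r - 1) - β ^ (r - 1) := by
  rcases hβα.eq_or_lt with rfl | hβα
  · simp
  have hm : 0 < (α + β) / 2 := by linarith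
  obtain ⟨ξ, ⟨hmξ, hξα⟩, hξ⟩ := exists_hasDerivAt_eq_slope (fun x => x ^ (r - 1))
    (fun x => (r - 1) * x ^ (r - 1 - 1)) (by linarith : (α + β) / 2 < α)
    (fun x hx =>
      (hasDerivAt_rpow_const (Or.inl (by linarith [hx.1]))).continuousAt.continuousWithinAt)
    (fun x hx => hasDerivAt_rpow_const (Or.inl (by linarith [hx.1])))
  have hslope :
      α ^ (r - 1) - ((α + β) / 2) ^ (r - 1) = (r - 1) * ξ ^ (r - 2) * ((α - β) / 2) := by
    rw [show r - 1 - 1 = r - 2 by ring, show α - (α + β) / 2 = (α - β) / 2 by ring] at hξ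
    rw [hξ]
    field_simp
  calc (r - 1) / 2 * min (2 ^ (-(r - 2))) 1 * (α + β) ^ (r - 2) * (α - β)
      = (r - 1) * (min (2 ^ (-(r - 2))) 1 * (α + β) ^ (r - 2)) * ((α - β) / 2) := by ring
    _ ≤ (r - 1) * ξ ^ (r - 2) * ((α - β) / 2) := by
      have hξ_bound :=
        min_two_rpow_neg_mul_rpow_le (q := r - 2) (by linarith) hmξ.le (by linarith)
      have hr1 : 0 ≤ r - 1 := by linarith
      have hαβ : 0 ≤ (α - β) / 2 := by linarith
      gcongr
    _ = α ^ (r - 1) - ((α + β) / 2) ^ (r - 1) := hslope.symm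
    _ ≤ α ^ (r - 1) - β ^ (r - 1) :=
      sub_le_sub_left (rpow_le_rpow hβ (by linarith) (by linarith)) _

lemma two_rpow_neg_mul_add_rpow_le_rpow_add_rpow {p α β : ℝ} (hp : 0 ≤ p) (hα : 0 ≤ α)
    (hβ : 0 ≤ β) :
    2 ^ (-p) * (α + β) ^ p ≤ α ^ p + β ^ p := by
  rw [rpow_neg zero_le_two, inv_mul_eq_div, ← div_rpow (by positivity) zero_le_two]
  rcases le_total β α with h | h
  · linarith [rpow_le_rpow (by positivity) (by linarith : (α + β) / 2 ≤ α) hp, rpow_nonneg hβ p]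
  · linarith [rpow_le_rpow (by positivity) (by linarith : (α + β) / 2 ≤ β) hp, rpow_nonneg hα p]

lemma mul_le_of_abs_le_of_mul_le_of_neg_mul_le {u v t m : ℝ} (ht : |t| ≤ m) (h₁ : v * m ≤ u)
    (h₂ : -(v * m) ≤ u) : v * t ≤ u := by
  have hm : 0 ≤ m := (abs_nonneg t).trans ht
  calc v * t ≤ |v| * |t| := by rw [← abs_mul]; exact le_abs_self _
    _ ≤ |v| * m := by gcongr
    _ = |v * m| := by rw [abs_mul, abs_of_nonneg hm]
    _ ≤ u := abs_le.mpr ⟨by linarith, h₁⟩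

lemma mul_add_rpow_sub_two_mul_le_of_abs_le_mul {r c α β t : ℝ} (hr : 1 < r)
    (hc₁ : c ≤ (r - 1) / 2 * min (2 ^ (-(r - 2))) 1) (hc₂ : c ≤ 2 ^ (-(r - 1)))
    (hβ : 0 ≤ β) (hβα : β ≤ α) (ht : |t| ≤ α * β) :
    c * (α + β) ^ (r - 2) * (α ^ 2 + β ^ 2 - 2 * t) ≤
      α ^ (r - 2) * α ^ 2 + β ^ (r - 2) * β ^ 2 - (α ^ (r - 2) + β ^ (r - 2)) * t := by
  have hα : 0 ≤ α := hβ.trans hβα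
  have hS : 0 ≤ (α + β) ^ (r - 2) := rpow_nonneg (by positivity) _
  have hsα := rpow_sub_two_mul_self hr hα
  have hsβ := rpow_sub_two_mul_self hr hβ
  have hs := rpow_sub_two_mul_self hr (add_nonneg hα hβ)
  have h_parallel :
      c * (α + β) ^ (r - 2) * (α - β) ^ 2 ≤ (α - β) * (α ^ (r - 1) - β ^ (r - 1)) :=
    calc c * (α + β) ^ (r - 2) * (α - β) ^ 2
        ≤ (r - 1) / 2 * min (2 ^ (-(r - 2))) 1 * (α + β) ^ (r - 2) * (α - β) * (α - β) := by
          rw [sq, ← mul_assoc]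
          have : 0 ≤ α - β := by linarith
          gcongr
      _ ≤ (α ^ (r - 1) - β ^ (r - 1)) * (α - β) :=
          mul_le_mul_of_nonneg_right (mul_add_rpow_mul_sub_le_rpow_sub_rpow hr hβ hβα)
            (by linarith)
      _ = (α - β) * (α ^ (r - 1) - β ^ (r - 1)) := mul_comm _ _
  have h_antiparallel :
      c * (α + β) ^ (r - 2) * (α + β) ^ 2 ≤ (α + β) * (α ^ (r - 1) + β ^ (r - 1)) :=
    calc c * (α + β) ^ (r - 2) * (α + β) ^ 2 = c * (α + β) ^ (r - 1) * (α + β) := by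
          rw [← hs]; ring
      _ ≤ 2 ^ (-(r - 1)) * (α + β) ^ (r - 1) * (α + β) := by gcongr
      _ ≤ (α ^ (r - 1) + β ^ (r - 1)) * (α + β) := by
          gcongr
          exact two_rpow_neg_mul_add_rpow_le_rpow_add_rpow (by linarith) hα hβ
      _ = (α + β) * (α ^ (r - 1) + β ^ (r - 1)) := mul_comm _ _
  have := mul_le_of_abs_le_of_mul_le_of_neg_mul_le
    (v := α ^ (r - 2) + β ^ (r - 2) - 2 * c * (α + β) ^ (r - 2))
    (u := α ^ (r - 2) * α ^ 2 + β ^ (r - 2) * β ^ 2 - c * (α + β) ^ (r - 2) * (α ^ 2 + β ^ 2)) ht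
    (by linear_combination h_parallel - (α - β) * hsα + (α - β) * hsβ)
    (by linear_combination h_antiparallel - (α + β) * hsα - (α + β) * hsβ)
  linear_combination this

lemma inner_smul_sub_smul_sub {E : Type*} [NormedAddCommGroup E] [InnerProductSpace ℝ E]
    (x y : ℝ) (a b : E) :
    ⟪x • a - y • b, a - b⟫_ℝ = x * ‖a‖ ^ 2 + y * ‖b‖ ^ 2 - (x + y) * ⟪a, b⟫_ℝ := by
  simp only [inner_sub_left, inner_sub_right, real_inner_smul_left, real_inner_self_eq_norm_sq,
    real_inner_comm b a]
  ring

theorem exists_pos_mul_le_inner_rpow_smul_sub {E : Type*} [NormedAddCommGroup E]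
    [InnerProductSpace ℝ E] {r : ℝ} (hr : 1 < r) :
    ∃ c > 0, ∀ a b : E,
      c * (‖a‖ + ‖b‖) ^ (r - 2) * ‖a - b‖ ^ 2 ≤
        ⟪‖a‖ ^ (r - 2) • a - ‖b‖ ^ (r - 2) • b, a - b⟫_ℝ := by
  refine ⟨min ((r - 1) / 2 * min (2 ^ (-(r - 2))) 1) (2 ^ (-(r - 1))),
    lt_min (by positivity) (by positivity), fun a b => ?_⟩
  wlog hba : ‖b‖ ≤ ‖a‖ generalizing a b
  · have hswap : ⟪‖a‖ ^ (r - 2) • a - ‖b‖ ^ (r - 2) • b, a - b⟫_ℝ =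
        ⟪‖b‖ ^ (r - 2) • b - ‖a‖ ^ (r - 2) • a, b - a⟫_ℝ := by
      rw [← inner_neg_neg, neg_sub, neg_sub]
    rw [hswap, add_comm ‖a‖, norm_sub_rev a b]
    exact this b a (le_of_not_ge hba)
  rw [inner_smul_sub_smul_sub, norm_sub_sq_real]
  linear_combination mul_add_rpow_sub_two_mul_le_of_abs_le_mul hr (min_le_left _ _)
    (min_le_right _ _) (norm_nonneg b) hba (abs_real_inner_le_norm a b)

theorem stmt_0_general (N : ℕ) (r : ℝ) (hr : 1 < r) :
    ∃ c : ℝ, 0 < c ∧ ∀ a b : EuclideanSpace ℝ (Fin N),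
      (inner ℝ ((‖a‖ ^ (r - 2)) • a - (‖b‖ ^ (r - 2)) • b) (a - b) : ℝ) ≥
          c * (‖a‖ + ‖b‖) ^ (r - 2) * ‖a - b‖ ^ 2 ∧
        c * (‖a‖ + ‖b‖) ^ (r - 2) * ‖a - b‖ ^ 2 ≥ 0 := by
  obtain ⟨c, hc, hineq⟩ :=
    exists_pos_mul_le_inner_rpow_smul_sub (E := EuclideanSpace ℝ (Fin N)) hr
  exact ⟨c, hc, fun a b => ⟨hineq a b, by positivity⟩⟩

/-- For every real number `r ∈ (1,∞)` there exists a constant `c_r > 0` such that for all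
vectors `a, b ∈ ℝ^N`,
`⟪‖a‖^(r-2) • a − ‖b‖^(r-2) • b, a − b⟫ ≥ c_r (‖a‖ + ‖b‖)^(r-2) ‖a − b‖² ≥ 0`. -/
theorem stmt_0 (N : ℕ) (hN : 1 ≤ N) (r : ℝ) (hr : 1 < r) :
    ∃ c : ℝ, 0 < c ∧ ∀ a b : EuclideanSpace ℝ (Fin N),
      (inner ℝ ((‖a‖ ^ (r - 2)) • a - (‖b‖ ^ (r - 2)) • b) (a - b) : ℝ) ≥
          c * (‖a‖ + ‖b‖) ^ (r - 2) * ‖a - b‖ ^ 2 ∧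
        c * (‖a‖ + ‖b‖) ^ (r - 2) * ‖a - b‖ ^ 2 ≥ 0 :=
  stmt_0_general N r hr
end

section
/- For every real number r in [2,∞) there exists a constant c'_r in (0,1] such that for all real numbers a, b, sgn(a − b) · (|a|^{r-2} a − |b|^{r-2} b) ≥ c'_r |a − b|^{r-1}. -/
private lemma superadd {p x y : ℝ} (hx : 0 ≤ x) (hy : 0 ≤ y) (hp : 1 ≤ p) :
    x ^ p + y ^ p ≤ (x + y) ^ p := by
  lift x to NNReal using hx
  lift y to NNReal using hy
  exact_mod_cast NNReal.add_rpow_le_rpow_add x y hp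

private lemma g_nonneg {s : ℝ} (hs : 1 ≤ s) {x : ℝ} (hx : 0 ≤ x) :
    |x| ^ (s - 1) * x = x ^ s := by
  rcases eq_or_lt_of_le hx with h | h
  · simp [← h, Real.zero_rpow (by linarith : s ≠ 0)]
  · rw [abs_of_pos h, ← Real.rpow_add_one h.ne']
    norm_num

private lemma g_nonpos {s : ℝ} (hs : 1 ≤ s) {x : ℝ} (hx : x ≤ 0) :
    |x| ^ (s - 1) * x = -((-x) ^ s) := by
  have h := g_nonneg hs (neg_nonneg.mpr hx)
  rw [abs_neg] at h
  linarith

private lemma main_ineq {s : ℝ} (hs : 1 ≤ s) {a b : ℝ} (hab : b ≤ a) :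
    (2 : ℝ) ^ (-s) * (a - b) ^ s ≤ |a| ^ (s - 1) * a - |b| ^ (s - 1) * b := by
  have hs0 : (0 : ℝ) ≤ s := by linarith
  have hab0 : (0 : ℝ) ≤ a - b := by linarith
  have hc1 : (2 : ℝ) ^ (-s) ≤ 1 :=
    Real.rpow_le_one_of_one_le_of_nonpos (by norm_num) (by linarith)
  have habs : (0 : ℝ) ≤ (a - b) ^ s := Real.rpow_nonneg hab0 s
  rcases le_or_gt 0 b with hb | hb
  · -- 0 ≤ b ≤ a
    have ha : 0 ≤ a := le_trans hb hab
    rw [g_nonneg hs ha, g_nonneg hs hb]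
    have h := superadd hab0 hb hs
    rw [sub_add_cancel] at h
    nlinarith [mul_le_of_le_one_left habs hc1]
  · rcases le_or_gt a 0 with ha | ha
    · -- b ≤ a ≤ 0
      rw [g_nonpos hs ha, g_nonpos hs (le_of_lt hb)]
      have h := superadd hab0 (neg_nonneg.mpr ha) hs
      have : a - b + -a = -b := by ring
      rw [this] at h
      nlinarith [mul_le_of_le_one_left habs hc1]
    · -- b < 0 < a
      rw [g_nonneg hs (le_of_lt ha), g_nonpos hs (le_of_lt hb)]
      set M := max a (-b) with hM
      have hMa : a ≤ M := le_max_left _ _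
      have hMb : -b ≤ M := le_max_right _ _
      have hM0 : 0 ≤ M := le_trans (le_of_lt ha) hMa
      have h1 : a - b ≤ 2 * M := by linarith
      have h2 : (a - b) ^ s ≤ (2 * M) ^ s := Real.rpow_le_rpow hab0 h1 hs0
      have h3 : (2 * M) ^ s = 2 ^ s * M ^ s := Real.mul_rpow (by norm_num) hM0
      have h4 : (2 : ℝ) ^ (-s) * 2 ^ s = 1 := by
        rw [← Real.rpow_add (by norm_num)]; norm_num
      have h5 : M ^ s ≤ a ^ s + (-b) ^ s := by
        rcases max_cases a (-b) with ⟨h, _⟩ | ⟨h, _⟩ <;> rw [hM, h]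
        · nlinarith [Real.rpow_nonneg (neg_nonneg.mpr (le_of_lt hb)) s]
        · nlinarith [Real.rpow_nonneg (le_of_lt ha) s]
      have hcpos : (0 : ℝ) < (2 : ℝ) ^ (-s) := Real.rpow_pos_of_pos (by norm_num) _
      calc (2 : ℝ) ^ (-s) * (a - b) ^ s ≤ (2 : ℝ) ^ (-s) * (2 ^ s * M ^ s) := by
            nlinarith
        _ = M ^ s := by rw [← mul_assoc, h4, one_mul]
        _ ≤ a ^ s - -((-b) ^ s) := by linarith

/-- For every real number `r ∈ [2,∞)` there exists a constant `c'_r ∈ (0,1]` such that for all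
real numbers `a, b`, `sgn(a − b) (|a|^(r-2) a − |b|^(r-2) b) ≥ c'_r |a − b|^(r-1)`. -/
theorem stmt_2 (r : ℝ) (hr : 2 ≤ r) :
    ∃ c : ℝ, c ∈ Set.Ioc (0 : ℝ) 1 ∧ ∀ a b : ℝ,
      Real.sign (a - b) * (|a| ^ (r - 2) * a - |b| ^ (r - 2) * b) ≥ c * |a - b| ^ (r - 1) := by
  have hs : (1 : ℝ) ≤ r - 1 := by linarith
  have hE : r - 1 - 1 = r - 2 := by ring
  refine ⟨(2 : ℝ) ^ (-(r - 1)), ⟨Real.rpow_pos_of_pos (by norm_num) _,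
    Real.rpow_le_one_of_one_le_of_nonpos (by norm_num) (by linarith)⟩, fun a b => ?_⟩
  rcases lt_trichotomy a b with h | h | h
  · rw [Real.sign_of_neg (by linarith : a - b < 0), abs_of_neg (by linarith : a - b < 0)]
    have := main_ineq hs (le_of_lt h)
    rw [hE] at this
    have hba : -(a - b) = b - a := by ring
    rw [hba]
    linarith
  · subst h
    simp [Real.zero_rpow (by intro hc; rw [sub_eq_zero] at hc; linarith : r - 1 ≠ 0)]
  · rw [Real.sign_of_pos (by linarith : 0 < a - b), abs_of_pos (by linarith : 0 < a - b)]
    have := main_ineq hs (le_of_lt h)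
    rw [hE] at this
    linarith
end

section
/- For every real number r in (1,2] and every ε > 0 there exists a constant c_{r,ε} > 0 such that for all vectors a, b in ℝ^N satisfying ‖a − b‖ ≥ ε · min(‖a‖, ‖b‖), one has ⟨‖a‖^{r-2} a − ‖b‖^{r-2} b, a − b⟩ ≥ c_{r,ε} ‖a − b‖^r. -/
/-!
Put `A = ‖a‖ ^ (r - 2)` and `B = ‖b‖ ^ (r - 2)`. The pairing splits as
`(A‖a‖ - B‖b‖)(‖a‖ - ‖b‖) + (A + B)(‖a‖‖b‖ - ⟪a, b⟫)`, a sum of two nonnegative terms.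
If `‖b‖ ≤ ‖a‖`, concavity of `t ↦ t ^ (r - 1)` bounds the first term below by
`(r - 1) A (‖a‖ - ‖b‖)²`, and the second is at least `A (‖a - b‖² - (‖a‖ - ‖b‖)²) / 2`;
together they give `(r - 1) / 2 · max ‖a‖ ‖b‖ ^ (r - 2) · ‖a - b‖²`. The separation hypothesis
gives `max ‖a‖ ‖b‖ ≤ (1 + 1 / ε) ‖a - b‖`, and since `r - 2 ≤ 0` this turns the bound into
`c ‖a - b‖ ^ r`.
-/

open Real
open scoped RealInnerProductSpace

theorem Real.mul_rpow_sub_one_mul_sub_le_rpow_sub_rpow {p m M : ℝ} (hp0 : 0 ≤ p) (hp1 : p ≤ 1)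
    (hm : 0 ≤ m) (hmM : m ≤ M) : p * M ^ (p - 1) * (M - m) ≤ M ^ p - m ^ p := by
  rcases (hm.trans hmM).eq_or_lt with rfl | hM
  · obtain rfl : m = 0 := le_antisymm hmM hm
    simp
  have hbern := rpow_one_add_le_one_add_mul_self (s := m / M - 1)
    (by linarith [div_nonneg hm hM.le]) hp0 hp1
  rw [add_sub_cancel, div_rpow hm hM.le, div_le_iff₀ (rpow_pos_of_pos hM p)] at hbern
  have hMp : M ^ p = M ^ (p - 1) * M := by rw [← rpow_add_one hM.ne']; ring_nf
  calc p * M ^ (p - 1) * (M - m) = p * M ^ p * (1 - m / M) := by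
        rw [hMp]; field_simp
    _ ≤ M ^ p - m ^ p := by nlinarith

section InnerProductSpace

variable {E : Type*} [NormedAddCommGroup E] [InnerProductSpace ℝ E]

theorem inner_smul_sub_smul_sub_eq (A B : ℝ) (a b : E) :
    ⟪A • a - B • b, a - b⟫ =
      (A * ‖a‖ - B * ‖b‖) * (‖a‖ - ‖b‖) + (A + B) * (‖a‖ * ‖b‖ - ⟪a, b⟫) := by
  simp only [inner_sub_left, inner_sub_right, real_inner_smul_left,
    real_inner_self_eq_norm_mul_norm, real_inner_comm a b]
  ring

theorem mul_rpow_mul_sq_le_inner_rpow_smul_sub {r : ℝ} (hr : r ∈ Set.Ioc 1 2) {a b : E}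
    (hba : ‖b‖ ≤ ‖a‖) :
    (r - 1) / 2 * ‖a‖ ^ (r - 2) * ‖a - b‖ ^ 2 ≤
      ⟪‖a‖ ^ (r - 2) • a - ‖b‖ ^ (r - 2) • b, a - b⟫ := by
  obtain ⟨hr1, hr2⟩ := hr
  -- also at `x = 0`, because `r ≠ 1`
  have hpow (x : ℝ) (hx : 0 ≤ x) : x ^ (r - 2) * x = x ^ (r - 1) := by
    rw [← rpow_add_one' hx (by linarith)]; ring_nf
  have htangent := mul_rpow_sub_one_mul_sub_le_rpow_sub_rpow (p := r - 1) (by linarith)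
    (by linarith) (norm_nonneg b) hba
  rw [show r - 1 - 1 = r - 2 by ring] at htangent
  have hcs : 0 ≤ ‖a‖ * ‖b‖ - ⟪a, b⟫ := sub_nonneg.2 (real_inner_le_norm a b)
  have hsq : ‖a - b‖ ^ 2 = (‖a‖ - ‖b‖) ^ 2 + 2 * (‖a‖ * ‖b‖ - ⟪a, b⟫) := by
    rw [norm_sub_sq_real]; ring
  have hA := rpow_nonneg (norm_nonneg a) (r - 2)
  have hB := rpow_nonneg (norm_nonneg b) (r - 2)
  have hs : 0 ≤ ‖a‖ - ‖b‖ := sub_nonneg.2 hba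
  rw [inner_smul_sub_smul_sub_eq, hpow _ (norm_nonneg a), hpow _ (norm_nonneg b), hsq]
  nlinarith [mul_le_mul_of_nonneg_right htangent hs, mul_nonneg hB hcs,
    mul_nonneg (mul_nonneg hA hcs) (by linarith : 0 ≤ 2 - r),
    mul_nonneg (mul_nonneg hA (sq_nonneg (‖a‖ - ‖b‖))) (by linarith : 0 ≤ r - 1)]

theorem mul_max_rpow_mul_sq_le_inner_rpow_smul_sub {r : ℝ} (hr : r ∈ Set.Ioc 1 2) (a b : E) :
    (r - 1) / 2 * max ‖a‖ ‖b‖ ^ (r - 2) * ‖a - b‖ ^ 2 ≤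
      ⟪‖a‖ ^ (r - 2) • a - ‖b‖ ^ (r - 2) • b, a - b⟫ := by
  rcases le_total ‖b‖ ‖a‖ with hba | hab
  · rw [max_eq_left hba]
    exact mul_rpow_mul_sq_le_inner_rpow_smul_sub hr hba
  · rw [max_eq_right hab, ← neg_sub b a, ← neg_sub (‖b‖ ^ (r - 2) • b), inner_neg_neg,
      norm_neg]
    exact mul_rpow_mul_sq_le_inner_rpow_smul_sub hr hab

end InnerProductSpace

theorem stmt_3_general (N : ℕ) (r : ℝ) (hr : r ∈ Set.Ioc (1 : ℝ) 2)
    (ε : ℝ) (hε : 0 < ε) :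
    ∃ c : ℝ, 0 < c ∧ ∀ a b : EuclideanSpace ℝ (Fin N),
      ‖a - b‖ ≥ ε * min ‖a‖ ‖b‖ →
      (inner ℝ ((‖a‖ ^ (r - 2)) • a - (‖b‖ ^ (r - 2)) • b) (a - b) : ℝ) ≥ c * ‖a - b‖ ^ r := by
  have hr1 : 0 < r - 1 := by linarith [hr.1]
  refine ⟨(r - 1) / 2 * (1 + 1 / ε) ^ (r - 2), by positivity, fun a b hab => ?_⟩
  rcases eq_or_ne a b with rfl | hne
  · simp [zero_rpow (by linarith : r ≠ 0)]
  set d := ‖a - b‖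
  have hd : 0 < d := norm_pos_iff.2 (sub_ne_zero.2 hne)
  have hmax : max ‖a‖ ‖b‖ ≤ (1 + 1 / ε) * d := by
    have hmin : min ‖a‖ ‖b‖ ≤ d / ε := by rw [le_div_iff₀ hε]; linarith
    have hgap : max ‖a‖ ‖b‖ - min ‖a‖ ‖b‖ ≤ d :=
      (max_sub_min_eq_abs' _ _).trans_le (abs_norm_sub_norm_le a b)
    linarith [show (1 + 1 / ε) * d = d + d / ε by ring]
  have hmax_pos : 0 < max ‖a‖ ‖b‖ := by
    linarith [norm_sub_le a b, le_max_left ‖a‖ ‖b‖, le_max_right ‖a‖ ‖b‖]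
  calc (r - 1) / 2 * (1 + 1 / ε) ^ (r - 2) * d ^ r
      = (r - 1) / 2 * ((1 + 1 / ε) * d) ^ (r - 2) * d ^ 2 := by
        have hdr : d ^ r = d ^ (r - 2) * d ^ 2 := by
          rw [← rpow_natCast, ← rpow_add hd]; norm_num
        rw [mul_rpow (by positivity) hd.le, hdr]
        ring
    _ ≤ (r - 1) / 2 * max ‖a‖ ‖b‖ ^ (r - 2) * d ^ 2 := by
        have := rpow_le_rpow_of_nonpos hmax_pos hmax (by linarith [hr.2] : r - 2 ≤ 0)
        gcongr
    _ ≤ _ := mul_max_rpow_mul_sq_le_inner_rpow_smul_sub hr a b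

/-- For every real number `r ∈ (1,2]` and every `ε > 0` there exists a constant `c_{r,ε} > 0`
such that for all vectors `a, b ∈ ℝ^N` with `‖a − b‖ ≥ ε · min ‖a‖ ‖b‖`, one has
`⟪‖a‖^(r-2) • a − ‖b‖^(r-2) • b, a − b⟫ ≥ c_{r,ε} ‖a − b‖^r`. -/
theorem stmt_3 (N : ℕ) (hN : 1 ≤ N) (r : ℝ) (hr : r ∈ Set.Ioc (1 : ℝ) 2)
    (ε : ℝ) (hε : 0 < ε) :
    ∃ c : ℝ, 0 < c ∧ ∀ a b : EuclideanSpace ℝ (Fin N),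
      ‖a - b‖ ≥ ε * min ‖a‖ ‖b‖ →
      (inner ℝ ((‖a‖ ^ (r - 2)) • a - (‖b‖ ^ (r - 2)) • b) (a - b) : ℝ) ≥ c * ‖a - b‖ ^ r :=
  stmt_3_general N r hr ε hε
end

section
/- For every real number r in (1,2] and every ε > 0 there exists a constant c_{r,ε} > 0 such that for all real numbers a, b satisfying |a − b| ≥ ε · min(|a|, |b|), one has sgn(a − b) · (|a|^{r-2} a − |b|^{r-2} b) ≥ c_{r,ε} |a − b|^{r-1}. -/
/-- For every real number `r ∈ (1,2]` and every `ε > 0` there exists a constant `c_{r,ε} > 0`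
such that for all real numbers `a, b` with `|a − b| ≥ ε · min |a| |b|`, one has
`sgn(a − b) (|a|^(r-2) a − |b|^(r-2) b) ≥ c_{r,ε} |a − b|^(r-1)`. -/
theorem stmt_4 (r : ℝ) (hr : r ∈ Set.Ioc (1 : ℝ) 2) (ε : ℝ) (hε : 0 < ε) :
    ∃ c : ℝ, 0 < c ∧ ∀ a b : ℝ,
      |a - b| ≥ ε * min |a| |b| →
      Real.sign (a - b) * (|a| ^ (r - 2) * a - |b| ^ (r - 2) * b) ≥ c * |a - b| ^ (r - 1) := by
  obtain ⟨hr1, hr2⟩ := hr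
  have hs : 0 < r - 1 := by linarith
  set c1 : ℝ := 1 - ((1 + ε)⁻¹) ^ (r - 1) with hc1def
  set c2 : ℝ := ((2 : ℝ)⁻¹) ^ (r - 1) with hc2def
  have hc1 : 0 < c1 := by
    have : ((1 + ε)⁻¹) ^ (r - 1) < 1 :=
      Real.rpow_lt_one (by positivity) (by rw [inv_lt_one_iff₀]; right; linarith) hs
    simp [hc1def]; linarith
  have hc2 : 0 < c2 := Real.rpow_pos_of_pos (by norm_num) _
  refine ⟨min c2 c1, lt_min hc2 hc1, ?_⟩
  have hcle1 : min c2 c1 ≤ c1 := min_le_right _ _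
  have hcle2 : min c2 c1 ≤ c2 := min_le_left _ _
  -- g on nonnegative / nonpositive reals
  have hg_pos : ∀ x : ℝ, 0 ≤ x → |x| ^ (r - 2) * x = x ^ (r - 1) := by
    intro x hx
    rcases hx.eq_or_lt with h | h
    · simp [← h, Real.zero_rpow hs.ne']
    · rw [abs_of_pos h, show r - 1 = (r - 2) + 1 by ring, Real.rpow_add_one h.ne']
  have hg_neg : ∀ x : ℝ, x ≤ 0 → |x| ^ (r - 2) * x = -((-x) ^ (r - 1)) := by
    intro x hx
    have := hg_pos (-x) (by linarith)
    rw [abs_neg] at this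
    linarith [this]
  -- positive same-sign case
  have hpos : ∀ x y : ℝ, 0 ≤ y → y < x → x - y ≥ ε * y →
      x ^ (r - 1) - y ^ (r - 1) ≥ min c2 c1 * (x - y) ^ (r - 1) := by
    intro x y hy hyx hcond
    have hx : 0 < x := lt_of_le_of_lt hy hyx
    have hxy : 0 < x - y := by linarith
    have h1 : y / x ≤ (1 + ε)⁻¹ := by
      rw [div_le_iff₀ hx, inv_mul_eq_div, le_div_iff₀ (by linarith : (0:ℝ) < 1 + ε)]
      nlinarith
    have h2 : (y / x) ^ (r - 1) ≤ ((1 + ε)⁻¹) ^ (r - 1) :=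
      Real.rpow_le_rpow (by positivity) h1 hs.le
    have h3 : y ^ (r - 1) = x ^ (r - 1) * (y / x) ^ (r - 1) := by
      rw [← Real.mul_rpow hx.le (by positivity)]
      congr 1
      field_simp
    have hxpow : (0:ℝ) ≤ x ^ (r - 1) := Real.rpow_nonneg hx.le _
    have h4 : x ^ (r - 1) - y ^ (r - 1) ≥ x ^ (r - 1) * c1 := by
      rw [h3, hc1def]
      nlinarith [mul_le_mul_of_nonneg_left h2 hxpow]
    have h5 : (x - y) ^ (r - 1) ≤ x ^ (r - 1) :=
      Real.rpow_le_rpow hxy.le (by linarith) hs.le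
    calc min c2 c1 * (x - y) ^ (r - 1)
        ≤ c1 * (x - y) ^ (r - 1) :=
          mul_le_mul_of_nonneg_right hcle1 (Real.rpow_nonneg hxy.le _)
      _ ≤ c1 * x ^ (r - 1) := mul_le_mul_of_nonneg_left h5 hc1.le
      _ = x ^ (r - 1) * c1 := mul_comm _ _
      _ ≤ x ^ (r - 1) - y ^ (r - 1) := h4
  -- key lemma for a > b
  have key : ∀ a b : ℝ, b < a → a - b ≥ ε * min |a| |b| →
      |a| ^ (r - 2) * a - |b| ^ (r - 2) * b ≥ min c2 c1 * (a - b) ^ (r - 1) := by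
    intro a b hab hcond
    rcases le_or_gt 0 b with hb | hb
    · -- 0 ≤ b < a
      have ha : (0:ℝ) ≤ a := le_of_lt (lt_of_le_of_lt hb hab)
      rw [abs_of_nonneg ha, abs_of_nonneg hb, min_eq_right hab.le] at hcond
      rw [hg_pos a ha, hg_pos b hb]
      exact hpos a b hb hab hcond
    · rcases le_or_gt a 0 with ha | ha
      · -- b < a ≤ 0
        rw [abs_of_nonpos ha, abs_of_nonpos (le_of_lt hb),
          min_eq_left (by linarith : -a ≤ -b)] at hcond
        rw [hg_neg a ha, hg_neg b hb.le]
        have := hpos (-b) (-a) (by linarith) (by linarith) (by linarith)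
        have heq : -b - -a = a - b := by ring
        rw [heq] at this
        linarith
      · -- b < 0 < a : mixed signs, unconditional
        have hxy : 0 < a - b := by linarith
        rw [hg_pos a ha.le, hg_neg b hb.le]
        have hhalf : ((a - b) / 2) ^ (r - 1) = (a - b) ^ (r - 1) * c2 := by
          rw [hc2def, div_eq_mul_inv, Real.mul_rpow hxy.le (by norm_num)]
        have hfin : ((a - b) / 2) ^ (r - 1) ≤ a ^ (r - 1) + (-b) ^ (r - 1) := by
          rcases le_total a (-b) with h | h
          · have h1 : ((a - b) / 2) ^ (r - 1) ≤ (-b) ^ (r - 1) :=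
              Real.rpow_le_rpow (by linarith) (by linarith) hs.le
            have h2 : (0:ℝ) ≤ a ^ (r - 1) := Real.rpow_nonneg ha.le _
            linarith
          · have h1 : ((a - b) / 2) ^ (r - 1) ≤ a ^ (r - 1) :=
              Real.rpow_le_rpow (by linarith) (by linarith) hs.le
            have h2 : (0:ℝ) ≤ (-b) ^ (r - 1) := Real.rpow_nonneg (by linarith) _
            linarith
        have hc : min c2 c1 * (a - b) ^ (r - 1) ≤ ((a - b) / 2) ^ (r - 1) := by
          rw [hhalf]
          calc min c2 c1 * (a - b) ^ (r - 1) ≤ c2 * (a - b) ^ (r - 1) :=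
                mul_le_mul_of_nonneg_right hcle2 (Real.rpow_nonneg hxy.le _)
            _ = (a - b) ^ (r - 1) * c2 := mul_comm _ _
        linarith
  intro a b hab
  rcases lt_trichotomy a b with h | h | h
  · have hsgn : Real.sign (a - b) = -1 := Real.sign_of_neg (by linarith)
    have habs : |a - b| = b - a := by rw [abs_of_neg (by linarith)]; ring
    rw [hsgn, habs]
    rw [habs, min_comm] at hab
    have := key b a h hab
    linarith
  · subst h
    simp [Real.zero_rpow hs.ne']
  · have hsgn : Real.sign (a - b) = 1 := Real.sign_of_pos (by linarith)
    have habs : |a - b| = a - b := abs_of_pos (by linarith)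
    rw [hsgn, habs]
    rw [habs] at hab
    have := key a b h hab
    linarith
end

section
/- Let u, v be real numbers and ξ > 0, and set g := ((u − v + ξ)⁺ − (u − v − ξ)⁻)/2, where x⁺ := max(x, 0) and x⁻ := max(−x, 0). Then for every convex function φ : ℝ → ℝ, the inequality φ(v + g) + φ(u − g) ≤ φ(u) + φ(v) holds. -/
/-- Let `u, v` be real numbers and `ξ > 0`, and set
`g := ((u − v + ξ)⁺ − (u − v − ξ)⁻)/2`, where `x⁺ := max x 0` and `x⁻ := max (−x) 0`.
Then for every convex function `φ : ℝ → ℝ`, `φ(v + g) + φ(u − g) ≤ φ(u) + φ(v)`. -/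
theorem stmt_6 (u v ξ : ℝ) (hξ : 0 < ξ) (g : ℝ)
    (hg : g = (max (u - v + ξ) 0 - max (-(u - v - ξ)) 0) / 2)
    (φ : ℝ → ℝ) (hφ : ConvexOn ℝ Set.univ φ) :
    φ (v + g) + φ (u - g) ≤ φ u + φ v := by
  -- bounds: g lies between 0 and u - v
  have hb : (0 ≤ g ∧ g ≤ u - v) ∨ (u - v ≤ g ∧ g ≤ 0) := by
    rcases le_total 0 (u - v) with hd | hd
    · left
      constructor
      · have h1 : max (u - v + ξ) 0 = u - v + ξ := max_eq_left (by linarith)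
        have h2 : max (-(u - v - ξ)) 0 ≤ u - v + ξ :=
          max_le (by linarith) (by linarith)
        rw [hg, h1]; linarith
      · have h1 : max (u - v + ξ) 0 = u - v + ξ := max_eq_left (by linarith)
        have h2 : -(u - v - ξ) ≤ max (-(u - v - ξ)) 0 := le_max_left _ _
        rw [hg, h1]; linarith
    · right
      constructor
      · have h1 : max (-(u - v - ξ)) 0 = -(u - v - ξ) := max_eq_left (by linarith)
        have h2 : u - v + ξ ≤ max (u - v + ξ) 0 := le_max_left _ _
        rw [hg, h1]; linarith
      · have h1 : max (-(u - v - ξ)) 0 = -(u - v - ξ) := max_eq_left (by linarith)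
        have h2 : max (u - v + ξ) 0 ≤ -(u - v - ξ) :=
          max_le (by linarith) (by linarith)
        rw [hg, h1]; linarith
  -- find t ∈ [0,1] with g = t * (u - v)
  have key : ∃ t : ℝ, 0 ≤ t ∧ t ≤ 1 ∧ g = t * (u - v) := by
    rcases lt_trichotomy (u - v) 0 with hlt | heq | hgt
    · refine ⟨g / (u - v), ?_, ?_, (div_mul_cancel₀ g (ne_of_lt hlt)).symm⟩
      · have h2 : g ≤ 0 := by rcases hb with ⟨h1, h2⟩ | ⟨h1, h2⟩ <;> linarith
        exact div_nonneg_of_nonpos h2 hlt.le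
      · have h1 : u - v ≤ g := by rcases hb with ⟨h1, h2⟩ | ⟨h1, h2⟩ <;> linarith
        rw [div_le_one_of_neg hlt]; exact h1
    · refine ⟨0, le_refl _, zero_le_one, ?_⟩
      have : g = 0 := by rcases hb with ⟨h1, h2⟩ | ⟨h1, h2⟩ <;> linarith
      rw [this]; ring
    · refine ⟨g / (u - v), ?_, ?_, (div_mul_cancel₀ g (ne_of_gt hgt)).symm⟩
      · have h1 : 0 ≤ g := by rcases hb with ⟨h1, h2⟩ | ⟨h1, h2⟩ <;> linarith
        exact div_nonneg h1 hgt.le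
      · have h2 : g ≤ u - v := by rcases hb with ⟨h1, h2⟩ | ⟨h1, h2⟩ <;> linarith
        rw [div_le_one hgt]; exact h2
  obtain ⟨t, ht0, ht1, htg⟩ := key
  have h1 : φ (v + g) ≤ t * φ u + (1 - t) * φ v := by
    have h := hφ.2 (Set.mem_univ u) (Set.mem_univ v) ht0 (sub_nonneg.mpr ht1) (by ring)
    simp only [smul_eq_mul] at h
    have heq : v + g = t * u + (1 - t) * v := by rw [htg]; ring
    rw [heq]; exact h
  have h2 : φ (u - g) ≤ (1 - t) * φ u + t * φ v := by
    have h := hφ.2 (Set.mem_univ u) (Set.mem_univ v) (sub_nonneg.mpr ht1) ht0 (by ring)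
    simp only [smul_eq_mul] at h
    have heq : u - g = (1 - t) * u + t * v := by rw [htg]; ring
    rw [heq]; exact h
  linarith
end

section
/- Let P, Q : ℝ → ℝ be continuous functions, Y₀ a real number, and define X(t) := exp(−∫₀ᵗ P(l) dl) · (Y₀ − ∫₀ᵗ Q(ξ) · exp(∫₀^ξ P(l) dl) dξ). If Y : ℝ → ℝ is differentiable with Y(0) ≤ Y₀ and satisfies the differential inequality Y'(t) + P(t) Y(t) + Q(t) ≤ 0 for all t ≥ 0, then Y(t) ≤ X(t) for all t ≥ 0. -/
/-!
Multiplying by the integrating factor `exp (∫₀ᵗ P)` turns `Y' + P Y + Q` into the derivative of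
`Y · exp (∫₀ᵗ P) + ∫₀ᵗ Q · exp (∫₀^ξ P)`, so the differential inequality makes this function
antitone on `[0, ∞)`; comparing its values at `t` and at `0` is exactly `Y t ≤ X t`.
-/

open intervalIntegral Set

theorem hasDerivAt_mul_exp_integral_add_integral {P Q Y : ℝ → ℝ} (hP : Continuous P)
    (hQ : Continuous Q) (a : ℝ) {t y' : ℝ} (hYt : HasDerivAt Y y' t) :
    HasDerivAt
      (fun s => Y s * Real.exp (∫ l in a..s, P l) +
        ∫ ξ in a..s, Q ξ * Real.exp (∫ l in a..ξ, P l))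
      ((y' + P t * Y t + Q t) * Real.exp (∫ l in a..t, P l)) t := by
  have hF : ∀ s, HasDerivAt (fun s => ∫ l in a..s, P l) (P s) s := fun s =>
    (hP.integral_hasStrictDerivAt a s).hasDerivAt
  have hQF : Continuous fun ξ => Q ξ * Real.exp (∫ l in a..ξ, P l) :=
    hQ.mul (Real.continuous_exp.comp (continuous_primitive (hP.intervalIntegrable ·) a))
  have hprod := hYt.mul (hF t).exp
  have hint := (hQF.integral_hasStrictDerivAt a t).hasDerivAt
  exact (hprod.add hint).congr_deriv (by ring)

theorem antitoneOn_mul_exp_integral_add_integral {P Q Y : ℝ → ℝ} (hP : Continuous P)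
    (hQ : Continuous Q) (hY : Differentiable ℝ Y) (a : ℝ)
    (hineq : ∀ t, a ≤ t → deriv Y t + P t * Y t + Q t ≤ 0) :
    AntitoneOn
      (fun s => Y s * Real.exp (∫ l in a..s, P l) +
        ∫ ξ in a..s, Q ξ * Real.exp (∫ l in a..ξ, P l))
      (Ici a) := by
  have hderiv := fun t => hasDerivAt_mul_exp_integral_add_integral hP hQ a (hY t).hasDerivAt
  have hdiff : Differentiable ℝ _ := fun t => (hderiv t).differentiableAt
  refine antitoneOn_of_deriv_nonpos (convex_Ici a) hdiff.continuous.continuousOn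
    hdiff.differentiableOn fun t ht => ?_
  rw [interior_Ici] at ht
  rw [(hderiv t).deriv]
  exact mul_nonpos_of_nonpos_of_nonneg (hineq t (le_of_lt ht)) (Real.exp_pos _).le

/-- Comparison principle: if `Y` is differentiable with `Y 0 ≤ Y₀` and satisfies
`Y' + P Y + Q ≤ 0` on `[0,∞)`, then `Y ≤ X` on `[0,∞)`, where
`X t := exp(−∫₀ᵗ P) · (Y₀ − ∫₀ᵗ Q(ξ) exp(∫₀^ξ P) dξ)`. -/
theorem stmt_8 (P Q : ℝ → ℝ) (hP : Continuous P) (hQ : Continuous Q) (Y₀ : ℝ)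
    (X Y : ℝ → ℝ)
    (hX : ∀ t : ℝ, X t = Real.exp (-∫ l in (0:ℝ)..t, P l) *
        (Y₀ - ∫ ξ in (0:ℝ)..t, Q ξ * Real.exp (∫ l in (0:ℝ)..ξ, P l)))
    (hY : Differentiable ℝ Y) (hY0 : Y 0 ≤ Y₀)
    (hineq : ∀ t : ℝ, 0 ≤ t → deriv Y t + P t * Y t + Q t ≤ 0) :
    ∀ t : ℝ, 0 ≤ t → Y t ≤ X t := by
  intro t ht
  have hmono := antitoneOn_mul_exp_integral_add_integral hP hQ hY 0 hineq
    (self_mem_Ici : (0 : ℝ) ∈ Ici 0) ht ht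
  simp only [integral_same, Real.exp_zero, mul_one, add_zero] at hmono
  rw [hX t, Real.exp_neg, inv_mul_eq_div, le_div_iff₀ (Real.exp_pos _)]
  linarith
end

section
/- Let a > 0, p > 2, q > 2, b, c be real numbers and t > 0, and define P(τ) := (b−2)p / ((a+p−2)t − (p−2)τ) + (c−2)q / ((a+q−2)t − (q−2)τ) for τ in [0, t). Then exp(−∫₀^ξ P(τ) dτ) tends, as ξ tends to t from the left, to (a/(a+p−2))^{(b−2)p/(p−2)} · (a/(a+q−2))^{(c−2)q/(q−2)}. -/
/-!
Each summand of `P` has the form `C / (A - B τ)` with `A - B τ > 0` on `[0, t]`, so it has the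
primitive `-(C / B) log (A - B τ)`, and `exp (-∫₀^ξ C / (A - B τ) dτ) = ((A - B ξ) / A) ^ (C / B)`.
This closed form is continuous at `ξ = t`, where `(A - B t) / A = a / (a + p - 2)` for
`A = (a + p - 2) t`, `B = p - 2`.
-/

open Real Filter Set Topology intervalIntegral

section LinearDenominator

variable {A B C ξ : ℝ}

lemma sub_mul_pos_of_mem_uIcc (hA : 0 < A) (hξ : 0 < A - B * ξ) {τ : ℝ} (hτ : τ ∈ uIcc 0 ξ) :
    0 < A - B * τ := by
  have hconv : OrdConnected {τ : ℝ | B * τ < A} :=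
    (convex_halfSpace_lt (f := fun τ : ℝ => B * τ) ⟨mul_add B, fun c x => mul_left_comm B c x⟩
      A).ordConnected
  exact sub_pos.2 (hconv.uIcc_subset (by simpa using hA) (sub_pos.1 hξ) hτ)

lemma eventually_sub_mul_pos {t : ℝ} (ht : 0 < A - B * t) : ∀ᶠ ξ in 𝓝 t, 0 < A - B * ξ :=
  (show Continuous fun ξ : ℝ => A - B * ξ by fun_prop).continuousAt.eventually
    (eventually_gt_nhds ht)

lemma intervalIntegrable_div_sub_mul (hA : 0 < A) (hξ : 0 < A - B * ξ) :
    IntervalIntegrable (fun τ => C / (A - B * τ)) MeasureTheory.volume 0 ξ :=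
  (continuousOn_const.div (by fun_prop) fun _ hτ =>
    (sub_mul_pos_of_mem_uIcc hA hξ hτ).ne').intervalIntegrable

lemma integral_div_sub_mul (hB : B ≠ 0) (hA : 0 < A) (hξ : 0 < A - B * ξ) :
    ∫ τ in (0:ℝ)..ξ, C / (A - B * τ) = C / B * (log A - log (A - B * ξ)) := by
  have hderiv : ∀ τ ∈ uIcc 0 ξ,
      HasDerivAt (fun τ => -(C / B) * log (A - B * τ)) (C / (A - B * τ)) τ := by
    intro τ hτ
    have hlin : HasDerivAt (fun τ : ℝ => A - B * τ) (-B) τ := by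
      simpa using ((hasDerivAt_id τ).const_mul B).const_sub A
    refine ((hlin.log (sub_mul_pos_of_mem_uIcc hA hξ hτ).ne').const_mul (-(C / B))).congr_deriv ?_
    field_simp
  rw [integral_eq_sub_of_hasDerivAt hderiv (intervalIntegrable_div_sub_mul hA hξ)]
  simp only [mul_zero, sub_zero]
  ring

lemma exp_neg_integral_div_sub_mul (hB : B ≠ 0) (hA : 0 < A) (hξ : 0 < A - B * ξ) :
    exp (-∫ τ in (0:ℝ)..ξ, C / (A - B * τ)) = ((A - B * ξ) / A) ^ (C / B) := by
  rw [integral_div_sub_mul hB hA hξ, rpow_def_of_pos (div_pos hξ hA), log_div hξ.ne' hA.ne']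
  ring_nf

lemma tendsto_exp_neg_integral_div_sub_mul (hB : B ≠ 0) (hA : 0 < A) {t : ℝ}
    (ht : 0 < A - B * t) :
    Tendsto (fun ξ => exp (-∫ τ in (0:ℝ)..ξ, C / (A - B * τ))) (𝓝 t)
      (𝓝 (((A - B * t) / A) ^ (C / B))) := by
  have hclosed : ContinuousAt (fun ξ => ((A - B * ξ) / A) ^ (C / B)) t :=
    ((continuousAt_const.sub (continuousAt_const.mul continuousAt_id)).div_const A).rpow_const
      (Or.inl (div_pos ht hA).ne')
  exact hclosed.tendsto.congr' ((eventually_sub_mul_pos ht).mono fun ξ hξ =>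
    (exp_neg_integral_div_sub_mul hB hA hξ).symm)

end LinearDenominator

/-- As `ξ → t⁻`, `exp(−∫₀^ξ P(τ) dτ)` tends to
`(a/(a+p−2))^((b−2)p/(p−2)) · (a/(a+q−2))^((c−2)q/(q−2))`, where
`P(τ) = (b−2)p/((a+p−2)t − (p−2)τ) + (c−2)q/((a+q−2)t − (q−2)τ)`. -/
theorem stmt_10 (a p q b c t : ℝ) (ha : 0 < a) (hp : 2 < p) (hq : 2 < q) (ht : 0 < t) :
    Filter.Tendsto
      (fun ξ : ℝ => Real.exp (-(∫ τ in (0:ℝ)..ξ,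
        ((b - 2) * p / ((a + p - 2) * t - (p - 2) * τ) +
          (c - 2) * q / ((a + q - 2) * t - (q - 2) * τ)))))
      (nhdsWithin t (Set.Iio t))
      (nhds ((a / (a + p - 2)) ^ ((b - 2) * p / (p - 2)) *
        (a / (a + q - 2)) ^ ((c - 2) * q / (q - 2)))) := by
  have hp2 : p - 2 ≠ 0 := by linarith
  have hq2 : q - 2 ≠ 0 := by linarith
  have hAp : 0 < (a + p - 2) * t := by nlinarith
  have hAq : 0 < (a + q - 2) * t := by nlinarith
  have hendp : (a + p - 2) * t - (p - 2) * t = a * t := by ring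
  have hendq : (a + q - 2) * t - (q - 2) * t = a * t := by ring
  have htp : 0 < (a + p - 2) * t - (p - 2) * t := hendp ▸ mul_pos ha ht
  have htq : 0 < (a + q - 2) * t - (q - 2) * t := hendq ▸ mul_pos ha ht
  have hlimp := tendsto_exp_neg_integral_div_sub_mul (C := (b - 2) * p) hp2 hAp htp
  have hlimq := tendsto_exp_neg_integral_div_sub_mul (C := (c - 2) * q) hq2 hAq htq
  rw [hendp, mul_div_mul_right _ _ ht.ne'] at hlimp
  rw [hendq, mul_div_mul_right _ _ ht.ne'] at hlimq
  refine ((hlimp.mul hlimq).congr' ?_).mono_left nhdsWithin_le_nhds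
  filter_upwards [eventually_sub_mul_pos htp, eventually_sub_mul_pos htq] with ξ hξp hξq
  rw [integral_add (intervalIntegrable_div_sub_mul hAp hξp)
    (intervalIntegrable_div_sub_mul hAq hξq), neg_add, exp_add]
end

section
/- Let a ≥ 2, p > 2, q > 2, d₁ > 1, d₂ > 1 and C_p, C_q, C', C'', κ_p, κ_q > 0 be real constants, and let t > 0. For τ in [0,t) define Q(τ) := [p/((a+p−2)t−(p−2)τ)] · log( C_p p^{d₁−1} (at−τ)(t−τ)^{d₁−1} / (C' ((a+p−2)t−(p−2)τ)^{d₁−1}) ) − 2 C_p κ_p p^{d₁} (at−τ)(t−τ)^{d₁−1} / ((a+p−2)t−(p−2)τ)^{d₁} + [q/((a+q−2)t−(q−2)τ)] · log( C_q q^{d₂−1} (at−τ)(t−τ)^{d₂−1} / (C'' ((a+q−2)t−(q−2)τ)^{d₂−1}) ) − 2 C_q κ_q q^{d₂} (at−τ)(t−τ)^{d₂−1} / ((a+q−2)t−(q−2)τ)^{d₂}. Then ∫₀^ξ Q(τ) dτ tends, as ξ tends to t from the left, to k₄ log t − k₅ t + k₆, where, with J₁ := ∫₀¹ dx/(a+(p−2)(1−x)),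 J₂ := ∫₀¹ log(a+(p−2)(1−x))/(a+(p−2)(1−x)) dx, J₃ := ∫₀¹ log(1−x)/(a+(p−2)(1−x)) dx, J₄ := ∫₀¹ log(a−x)/(a+(p−2)(1−x)) dx, J₅ := ∫₀¹ (a−x)(1−x)^{d₁−1}/(a+(p−2)(1−x))^{d₁} dx, and J₁', J₂', J₃', J₄', J₅' the analogous integrals with q and d₂ in place of p and d₁: k₄ := p J₁ + q J₁', k₅ := 2 C_p κ_p p^{d₁} J₅ + 2 C_q κ_q q^{d₂} J₅', and k₆ := p [ log(C_p p^{d₁−1}/C') J₁ + (d₁−1)(J₃ − J₂) + J₄ ] + q [ log(C_q q^{d₂−1}/C'') J₁' + (d₂−1)(J₃' − J₂') + J₄' ]. -/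
/-!
Substituting `τ = t x` turns each half of `Q` into `t⁻¹` times a linear combination of `log t`
and the integrands of `J₁, …, J₅` in `x`: all factors inside the logarithm are positive on
`(0, 1)`, so it splits into a sum of logarithms, and the powers of `t` factor out of the rpow
terms. These integrands are integrable on `[0, 1]` (the only singularity, `log (1 - x)` at
`x = 1`, is integrable), so `Q` is integrable on `[0, t]`, and by continuity of the primitive
the limit is the full integral `∫₀ᵗ Q`, which the substitution evaluates.
-/

open Real MeasureTheory Set intervalIntegral

/-- The two summands of `Q` are `halfQ a p d₁ Cp κp C' t` and `halfQ a q d₂ Cq κq C'' t`. -/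
noncomputable def halfQ (a r d C K C₀ t τ : ℝ) : ℝ :=
  r / ((a + r - 2) * t - (r - 2) * τ) *
      log (C * r ^ (d - 1) * (a * t - τ) * (t - τ) ^ (d - 1) /
        (C₀ * ((a + r - 2) * t - (r - 2) * τ) ^ (d - 1))) -
    2 * C * K * r ^ d * (a * t - τ) * (t - τ) ^ (d - 1) / ((a + r - 2) * t - (r - 2) * τ) ^ d

/-- `t * halfQ a r d C K C₀ t (t * x)`, expanded into the integrands of `J₁, …, J₅`. -/
noncomputable def rescaledHalfQ (a r d C K C₀ t x : ℝ) : ℝ :=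
  r * (log (C * r ^ (d - 1) / C₀) + log t) * (1 / (a + (r - 2) * (1 - x)))
    + r * (log (a - x) / (a + (r - 2) * (1 - x)))
    + r * (d - 1) * (log (1 - x) / (a + (r - 2) * (1 - x)))
    - r * (d - 1) * (log (a + (r - 2) * (1 - x)) / (a + (r - 2) * (1 - x)))
    - 2 * C * K * r ^ d * t * ((a - x) * (1 - x) ^ (d - 1) / (a + (r - 2) * (1 - x)) ^ d)

theorem tendsto_integral_nhdsLT_of_eqOn_Ico {E : Type*} [NormedAddCommGroup E]
    [NormedSpace ℝ E] {f g : ℝ → E} {a b : ℝ} (hab : a < b) (hg : IntervalIntegrable g volume a b)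
    (hfg : EqOn f g (Ico a b)) :
    Filter.Tendsto (fun ξ => ∫ x in a..ξ, f x) (nhdsWithin b (Iio b))
      (nhds (∫ x in a..b, g x)) := by
  have hcont : ContinuousWithinAt (fun ξ => ∫ x in a..ξ, g x) (Icc a b) b := by
    have := continuousOn_primitive_interval' hg left_mem_uIcc
    rw [uIcc_of_le hab.le] at this
    exact this b (right_mem_Icc.2 hab.le)
  rw [← nhdsWithin_Ioo_eq_nhdsLT hab]
  refine (hcont.tendsto.mono_left (nhdsWithin_mono _ Ioo_subset_Icc_self)).congr' ?_
  filter_upwards [self_mem_nhdsWithin] with ξ hξ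
  refine integral_congr fun x hx => (hfg ?_).symm
  rw [uIcc_of_le hξ.1.le] at hx
  exact ⟨hx.1, hx.2.trans_lt hξ.2⟩

theorem intervalIntegrable_log_one_sub :
    IntervalIntegrable (fun x => log (1 - x)) volume 0 1 := by
  simpa using (intervalIntegrable_log' (a := 1) (b := 0)).comp_sub_left 1

section

variable {a r d : ℝ}

theorem add_sub_two_mul_one_sub_pos (ha : 0 < a) (hr : 2 ≤ r) {x : ℝ} (hx : x ≤ 1) :
    0 < a + (r - 2) * (1 - x) := by
  nlinarith

theorem add_sub_two_mul_one_sub_ne_zero (ha : 0 < a) (hr : 2 ≤ r) :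
    ∀ x ∈ uIcc (0 : ℝ) 1, a + (r - 2) * (1 - x) ≠ 0 := fun x hx =>
  (add_sub_two_mul_one_sub_pos ha hr (by simpa using hx.2)).ne'

theorem intervalIntegrable_one_div_denom (ha : 0 < a) (hr : 2 ≤ r) :
    IntervalIntegrable (fun x => 1 / (a + (r - 2) * (1 - x))) volume 0 1 :=
  (continuousOn_const.div (by fun_prop) (add_sub_two_mul_one_sub_ne_zero ha hr)).intervalIntegrable

theorem intervalIntegrable_log_denom_div_denom (ha : 0 < a) (hr : 2 ≤ r) :
    IntervalIntegrable
      (fun x => log (a + (r - 2) * (1 - x)) / (a + (r - 2) * (1 - x))) volume 0 1 :=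
  ((ContinuousOn.log (by fun_prop) (add_sub_two_mul_one_sub_ne_zero ha hr)).div (by fun_prop)
    (add_sub_two_mul_one_sub_ne_zero ha hr)).intervalIntegrable

theorem intervalIntegrable_log_one_sub_div_denom (ha : 0 < a) (hr : 2 ≤ r) :
    IntervalIntegrable (fun x => log (1 - x) / (a + (r - 2) * (1 - x))) volume 0 1 := by
  simpa only [mul_one_div] using intervalIntegrable_log_one_sub.mul_continuousOn
    (g := fun x => 1 / (a + (r - 2) * (1 - x)))
    (continuousOn_const.div (by fun_prop) (add_sub_two_mul_one_sub_ne_zero ha hr))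

theorem intervalIntegrable_log_sub_div_denom (ha : 1 < a) (hr : 2 ≤ r) :
    IntervalIntegrable (fun x => log (a - x) / (a + (r - 2) * (1 - x))) volume 0 1 := by
  have hax : ∀ x ∈ uIcc (0 : ℝ) 1, a - x ≠ 0 := fun x hx => by
    have : x ≤ 1 := by simpa using hx.2
    linarith
  exact ((ContinuousOn.log (by fun_prop) hax).div (by fun_prop)
    (add_sub_two_mul_one_sub_ne_zero (by linarith) hr)).intervalIntegrable

theorem intervalIntegrable_rpow_div_denom_rpow (ha : 0 < a) (hr : 2 ≤ r) (hd : 1 ≤ d) :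
    IntervalIntegrable
      (fun x => (a - x) * (1 - x) ^ (d - 1) / (a + (r - 2) * (1 - x)) ^ d) volume 0 1 := by
  have hnum : ContinuousOn (fun x : ℝ => (a - x) * (1 - x) ^ (d - 1)) (uIcc 0 1) :=
    (continuousOn_const.sub continuousOn_id).mul
      ((continuousOn_const.sub continuousOn_id).rpow_const fun _ _ => Or.inr (by linarith))
  have hden : ContinuousOn (fun x : ℝ => (a + (r - 2) * (1 - x)) ^ d) (uIcc 0 1) :=
    ContinuousOn.rpow_const (by fun_prop) fun x hx =>
      Or.inl (add_sub_two_mul_one_sub_ne_zero ha hr x hx)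
  refine (hnum.div hden fun x hx => ?_).intervalIntegrable
  exact (rpow_pos_of_pos (add_sub_two_mul_one_sub_pos ha hr (by simpa using hx.2)) d).ne'

theorem intervalIntegrable_rescaledHalfQ (ha : 1 < a) (hr : 2 ≤ r) (hd : 1 ≤ d)
    (C K C₀ t : ℝ) :
    IntervalIntegrable (rescaledHalfQ a r d C K C₀ t) volume 0 1 :=
  have ha₀ : 0 < a := by linarith
  (((((intervalIntegrable_one_div_denom ha₀ hr).const_mul _).add
    ((intervalIntegrable_log_sub_div_denom ha hr).const_mul _)).add
    ((intervalIntegrable_log_one_sub_div_denom ha₀ hr).const_mul _)).sub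
    ((intervalIntegrable_log_denom_div_denom ha₀ hr).const_mul _)).sub
    ((intervalIntegrable_rpow_div_denom_rpow ha₀ hr hd).const_mul _)

theorem integral_rescaledHalfQ (ha : 1 < a) (hr : 2 ≤ r) (hd : 1 ≤ d) (C K C₀ t : ℝ) :
    ∫ x in (0 : ℝ)..1, rescaledHalfQ a r d C K C₀ t x
      = r * (log (C * r ^ (d - 1) / C₀) + log t) *
          (∫ x in (0 : ℝ)..1, 1 / (a + (r - 2) * (1 - x)))
        + r * (∫ x in (0 : ℝ)..1, log (a - x) / (a + (r - 2) * (1 - x)))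
        + r * (d - 1) * (∫ x in (0 : ℝ)..1, log (1 - x) / (a + (r - 2) * (1 - x)))
        - r * (d - 1) *
            (∫ x in (0 : ℝ)..1, log (a + (r - 2) * (1 - x)) / (a + (r - 2) * (1 - x)))
        - 2 * C * K * r ^ d * t *
            (∫ x in (0 : ℝ)..1, (a - x) * (1 - x) ^ (d - 1) / (a + (r - 2) * (1 - x)) ^ d) := by
  have ha₀ : 0 < a := by linarith
  have h₁ := (intervalIntegrable_one_div_denom ha₀ hr).const_mul
    (r * (log (C * r ^ (d - 1) / C₀) + log t))
  have h₂ := (intervalIntegrable_log_sub_div_denom ha hr).const_mul r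
  have h₃ := (intervalIntegrable_log_one_sub_div_denom ha₀ hr).const_mul (r * (d - 1))
  have h₄ := (intervalIntegrable_log_denom_div_denom ha₀ hr).const_mul (r * (d - 1))
  have h₅ := (intervalIntegrable_rpow_div_denom_rpow ha₀ hr hd).const_mul
    (2 * C * K * r ^ d * t)
  simp only [rescaledHalfQ]
  rw [integral_sub (((h₁.add h₂).add h₃).sub h₄) h₅, integral_sub ((h₁.add h₂).add h₃) h₄,
    integral_add (h₁.add h₂) h₃, integral_add h₁ h₂]
  simp only [intervalIntegral.integral_const_mul]

theorem log_halfQ_arg (ha : 1 ≤ a) (hr : 2 ≤ r) {C C₀ t x : ℝ} (hC : C ≠ 0) (hC₀ : C₀ ≠ 0)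
    (ht : 0 < t) (hx : x ∈ Ioo (0 : ℝ) 1) :
    log (C * r ^ (d - 1) * (t * (a - x)) * (t ^ (d - 1) * (1 - x) ^ (d - 1)) /
        (C₀ * (t ^ (d - 1) * (a + (r - 2) * (1 - x)) ^ (d - 1))))
      = log (C * r ^ (d - 1) / C₀) + log t + log (a - x)
        + (d - 1) * log (1 - x) - (d - 1) * log (a + (r - 2) * (1 - x)) := by
  have hD := add_sub_two_mul_one_sub_pos (a := a) (by linarith) hr hx.2.le
  have h1x : 0 < 1 - x := by linarith [hx.2]
  have hax : 0 < a - x := by linarith [hx.2]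
  have harg : C * r ^ (d - 1) * (t * (a - x)) * (t ^ (d - 1) * (1 - x) ^ (d - 1)) /
        (C₀ * (t ^ (d - 1) * (a + (r - 2) * (1 - x)) ^ (d - 1)))
      = C * r ^ (d - 1) / C₀ * t * (a - x) * (1 - x) ^ (d - 1) /
          (a + (r - 2) * (1 - x)) ^ (d - 1) := by
    field_simp
  rw [harg, log_div, log_mul, log_mul, log_mul, log_rpow h1x, log_rpow hD]
  all_goals positivity

theorem halfQ_mul (ha : 1 ≤ a) (hr : 2 ≤ r) {C C₀ t x : ℝ} (K : ℝ) (hC : C ≠ 0) (hC₀ : C₀ ≠ 0)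
    (ht : 0 < t) (hx : x ∈ Ioo (0 : ℝ) 1) :
    halfQ a r d C K C₀ t (t * x) = t⁻¹ * rescaledHalfQ a r d C K C₀ t x := by
  have hD := add_sub_two_mul_one_sub_pos (a := a) (by linarith) hr hx.2.le
  have h1x : 0 < 1 - x := by linarith [hx.2]
  have e₁ : (a + r - 2) * t - (r - 2) * (t * x) = t * (a + (r - 2) * (1 - x)) := by ring
  have e₂ : a * t - t * x = t * (a - x) := by ring
  have e₃ : t - t * x = t * (1 - x) := by ring
  have etd : t ^ d = t ^ (d - 1) * t := by
    rw [← rpow_add_one ht.ne', sub_add_cancel]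
  rw [halfQ, e₁, e₂, e₃, mul_rpow ht.le h1x.le, mul_rpow ht.le hD.le, mul_rpow ht.le hD.le,
    log_halfQ_arg ha hr hC hC₀ ht hx, etd, rescaledHalfQ]
  field_simp

theorem halfQ_eqOn (ha : 1 ≤ a) (hr : 2 ≤ r) {C C₀ t : ℝ} (K : ℝ) (hC : C ≠ 0) (hC₀ : C₀ ≠ 0)
    (ht : 0 < t) :
    EqOn (halfQ a r d C K C₀ t) (fun τ => t⁻¹ * rescaledHalfQ a r d C K C₀ t (τ / t))
      (Ioo 0 t) := fun τ hτ => by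
  have hx : τ / t ∈ Ioo (0 : ℝ) 1 := ⟨div_pos hτ.1 ht, (div_lt_one ht).2 hτ.2⟩
  simpa only [mul_div_cancel₀ τ ht.ne'] using halfQ_mul ha hr K hC hC₀ ht hx

theorem intervalIntegrable_halfQ (ha : 1 < a) (hr : 2 ≤ r) (hd : 1 ≤ d) {C C₀ t : ℝ} (K : ℝ)
    (hC : C ≠ 0) (hC₀ : C₀ ≠ 0) (ht : 0 < t) :
    IntervalIntegrable (halfQ a r d C K C₀ t) volume 0 t := by
  rw [intervalIntegrable_congr_uIoo (by
    rw [uIoo_of_le ht.le]; exact halfQ_eqOn ha.le hr K hC hC₀ ht)]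
  have := (intervalIntegrable_rescaledHalfQ ha hr hd C K C₀ t).comp_mul_right (c := t⁻¹)
  simp only [zero_div, one_div, inv_inv, ← div_eq_mul_inv] at this
  exact this.const_mul _

theorem integral_halfQ (ha : 1 ≤ a) (hr : 2 ≤ r) {C C₀ t : ℝ} (K : ℝ)
    (hC : C ≠ 0) (hC₀ : C₀ ≠ 0) (ht : 0 < t) :
    ∫ τ in (0 : ℝ)..t, halfQ a r d C K C₀ t τ =
      ∫ x in (0 : ℝ)..1, rescaledHalfQ a r d C K C₀ t x := by
  rw [integral_congr_Ioo_of_le ht.le (halfQ_eqOn ha hr K hC hC₀ ht),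
    intervalIntegral.integral_const_mul,
    integral_comp_div _ ht.ne', zero_div, div_self ht.ne', smul_eq_mul, ← mul_assoc,
    inv_mul_cancel₀ ht.ne', one_mul]

end

theorem stmt_15_general (a p q d₁ d₂ Cp Cq C' C'' κp κq t : ℝ)
    (ha : 2 ≤ a) (hp : 2 < p) (hq : 2 < q) (hd₁ : 1 < d₁) (hd₂ : 1 < d₂)
    (hCp : 0 < Cp) (hCq : 0 < Cq) (hC' : 0 < C') (hC'' : 0 < C'')
    (ht : 0 < t)
    (Q : ℝ → ℝ)
    (hQ : ∀ τ ∈ Set.Ico (0:ℝ) t, Q τ =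
      p / ((a + p - 2) * t - (p - 2) * τ) *
          Real.log (Cp * p ^ (d₁ - 1) * (a * t - τ) * (t - τ) ^ (d₁ - 1) /
            (C' * ((a + p - 2) * t - (p - 2) * τ) ^ (d₁ - 1))) -
        2 * Cp * κp * p ^ d₁ * (a * t - τ) * (t - τ) ^ (d₁ - 1) /
          ((a + p - 2) * t - (p - 2) * τ) ^ d₁ +
        q / ((a + q - 2) * t - (q - 2) * τ) *
          Real.log (Cq * q ^ (d₂ - 1) * (a * t - τ) * (t - τ) ^ (d₂ - 1) /
            (C'' * ((a + q - 2) * t - (q - 2) * τ) ^ (d₂ - 1))) -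
        2 * Cq * κq * q ^ d₂ * (a * t - τ) * (t - τ) ^ (d₂ - 1) /
          ((a + q - 2) * t - (q - 2) * τ) ^ d₂)
    (J₁ J₂ J₃ J₄ J₅ J₁' J₂' J₃' J₄' J₅' k₄ k₅ k₆ : ℝ)
    (hJ₁ : J₁ = ∫ x in (0:ℝ)..1, 1 / (a + (p - 2) * (1 - x)))
    (hJ₂ : J₂ = ∫ x in (0:ℝ)..1,
      Real.log (a + (p - 2) * (1 - x)) / (a + (p - 2) * (1 - x)))
    (hJ₃ : J₃ = ∫ x in (0:ℝ)..1, Real.log (1 - x) / (a + (p - 2) * (1 - x)))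
    (hJ₄ : J₄ = ∫ x in (0:ℝ)..1, Real.log (a - x) / (a + (p - 2) * (1 - x)))
    (hJ₅ : J₅ = ∫ x in (0:ℝ)..1,
      (a - x) * (1 - x) ^ (d₁ - 1) / (a + (p - 2) * (1 - x)) ^ d₁)
    (hJ₁' : J₁' = ∫ x in (0:ℝ)..1, 1 / (a + (q - 2) * (1 - x)))
    (hJ₂' : J₂' = ∫ x in (0:ℝ)..1,
      Real.log (a + (q - 2) * (1 - x)) / (a + (q - 2) * (1 - x)))
    (hJ₃' : J₃' = ∫ x in (0:ℝ)..1, Real.log (1 - x) / (a + (q - 2) * (1 - x)))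
    (hJ₄' : J₄' = ∫ x in (0:ℝ)..1, Real.log (a - x) / (a + (q - 2) * (1 - x)))
    (hJ₅' : J₅' = ∫ x in (0:ℝ)..1,
      (a - x) * (1 - x) ^ (d₂ - 1) / (a + (q - 2) * (1 - x)) ^ d₂)
    (hk₄ : k₄ = p * J₁ + q * J₁')
    (hk₅ : k₅ = 2 * Cp * κp * p ^ d₁ * J₅ + 2 * Cq * κq * q ^ d₂ * J₅')
    (hk₆ : k₆ = p * (Real.log (Cp * p ^ (d₁ - 1) / C') * J₁ + (d₁ - 1) * (J₃ - J₂) + J₄) +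
      q * (Real.log (Cq * q ^ (d₂ - 1) / C'') * J₁' + (d₂ - 1) * (J₃' - J₂') + J₄')) :
    Filter.Tendsto (fun ξ => ∫ τ in (0:ℝ)..ξ, Q τ) (nhdsWithin t (Set.Iio t))
      (nhds (k₄ * Real.log t - k₅ * t + k₆)) := by
  have ha₁ : 1 < a := by linarith
  have hQ_eq : EqOn Q (fun τ => halfQ a p d₁ Cp κp C' t τ + halfQ a q d₂ Cq κq C'' t τ)
      (Ico 0 t) := fun τ hτ => by
    simp only [hQ τ hτ, halfQ]
    ring
  have hp_int := intervalIntegrable_halfQ ha₁ hp.le hd₁.le κp hCp.ne' hC'.ne' ht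
  have hq_int := intervalIntegrable_halfQ ha₁ hq.le hd₂.le κq hCq.ne' hC''.ne' ht
  convert tendsto_integral_nhdsLT_of_eqOn_Ico ht (hp_int.add hq_int) hQ_eq using 2
  rw [integral_add hp_int hq_int, integral_halfQ ha₁.le hp.le κp hCp.ne' hC'.ne' ht,
    integral_halfQ ha₁.le hq.le κq hCq.ne' hC''.ne' ht,
    integral_rescaledHalfQ ha₁ hp.le hd₁.le, integral_rescaledHalfQ ha₁ hq.le hd₂.le,
    hk₄, hk₅, hk₆, hJ₁, hJ₂, hJ₃, hJ₄, hJ₅, hJ₁', hJ₂', hJ₃', hJ₄', hJ₅']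
  ring

/-- As `ξ → t⁻`, `∫₀^ξ Q(τ) dτ` tends to `k₄ log t − k₅ t + k₆`, with `Q` as in the
Appendix and the explicit constants `k₄, k₅, k₆` defined through the integrals
`J₁,…,J₅` (for `p, d₁`) and `J₁',…,J₅'` (for `q, d₂`). -/
theorem stmt_15 (a p q d₁ d₂ Cp Cq C' C'' κp κq t : ℝ)
    (ha : 2 ≤ a) (hp : 2 < p) (hq : 2 < q) (hd₁ : 1 < d₁) (hd₂ : 1 < d₂)
    (hCp : 0 < Cp) (hCq : 0 < Cq) (hC' : 0 < C') (hC'' : 0 < C'')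
    (hκp : 0 < κp) (hκq : 0 < κq) (ht : 0 < t)
    (Q : ℝ → ℝ)
    (hQ : ∀ τ ∈ Set.Ico (0:ℝ) t, Q τ =
      p / ((a + p - 2) * t - (p - 2) * τ) *
          Real.log (Cp * p ^ (d₁ - 1) * (a * t - τ) * (t - τ) ^ (d₁ - 1) /
            (C' * ((a + p - 2) * t - (p - 2) * τ) ^ (d₁ - 1))) -
        2 * Cp * κp * p ^ d₁ * (a * t - τ) * (t - τ) ^ (d₁ - 1) /
          ((a + p - 2) * t - (p - 2) * τ) ^ d₁ +
        q / ((a + q - 2) * t - (q - 2) * τ) *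
          Real.log (Cq * q ^ (d₂ - 1) * (a * t - τ) * (t - τ) ^ (d₂ - 1) /
            (C'' * ((a + q - 2) * t - (q - 2) * τ) ^ (d₂ - 1))) -
        2 * Cq * κq * q ^ d₂ * (a * t - τ) * (t - τ) ^ (d₂ - 1) /
          ((a + q - 2) * t - (q - 2) * τ) ^ d₂)
    (J₁ J₂ J₃ J₄ J₅ J₁' J₂' J₃' J₄' J₅' k₄ k₅ k₆ : ℝ)
    (hJ₁ : J₁ = ∫ x in (0:ℝ)..1, 1 / (a + (p - 2) * (1 - x)))
    (hJ₂ : J₂ = ∫ x in (0:ℝ)..1,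
      Real.log (a + (p - 2) * (1 - x)) / (a + (p - 2) * (1 - x)))
    (hJ₃ : J₃ = ∫ x in (0:ℝ)..1, Real.log (1 - x) / (a + (p - 2) * (1 - x)))
    (hJ₄ : J₄ = ∫ x in (0:ℝ)..1, Real.log (a - x) / (a + (p - 2) * (1 - x)))
    (hJ₅ : J₅ = ∫ x in (0:ℝ)..1,
      (a - x) * (1 - x) ^ (d₁ - 1) / (a + (p - 2) * (1 - x)) ^ d₁)
    (hJ₁' : J₁' = ∫ x in (0:ℝ)..1, 1 / (a + (q - 2) * (1 - x)))
    (hJ₂' : J₂' = ∫ x in (0:ℝ)..1,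
      Real.log (a + (q - 2) * (1 - x)) / (a + (q - 2) * (1 - x)))
    (hJ₃' : J₃' = ∫ x in (0:ℝ)..1, Real.log (1 - x) / (a + (q - 2) * (1 - x)))
    (hJ₄' : J₄' = ∫ x in (0:ℝ)..1, Real.log (a - x) / (a + (q - 2) * (1 - x)))
    (hJ₅' : J₅' = ∫ x in (0:ℝ)..1,
      (a - x) * (1 - x) ^ (d₂ - 1) / (a + (q - 2) * (1 - x)) ^ d₂)
    (hk₄ : k₄ = p * J₁ + q * J₁')
    (hk₅ : k₅ = 2 * Cp * κp * p ^ d₁ * J₅ + 2 * Cq * κq * q ^ d₂ * J₅')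
    (hk₆ : k₆ = p * (Real.log (Cp * p ^ (d₁ - 1) / C') * J₁ + (d₁ - 1) * (J₃ - J₂) + J₄) +
      q * (Real.log (Cq * q ^ (d₂ - 1) / C'') * J₁' + (d₂ - 1) * (J₃' - J₂') + J₄')) :
    Filter.Tendsto (fun ξ => ∫ τ in (0:ℝ)..ξ, Q τ) (nhdsWithin t (Set.Iio t))
      (nhds (k₄ * Real.log t - k₅ * t + k₆)) :=
  stmt_15_general a p q d₁ d₂ Cp Cq C' C'' κp κq t ha hp hq hd₁ hd₂ hCp hCq hC' hC'' ht Q hQ J₁ J₂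
    J₃ J₄ J₅ J₁' J₂' J₃' J₄' J₅' k₄ k₅ k₆ hJ₁ hJ₂ hJ₃ hJ₄ hJ₅ hJ₁' hJ₂' hJ₃' hJ₄' hJ₅' hk₄ hk₅ hk₆
end

section
/- Let (X, μ) be a finite measure space, let f : X → ℝ be measurable with |f| ≤ M μ-almost everywhere for some constant M > 0, and let s₀ > 0 be such that ∫ |f|^{s₀} dμ > 0. Then the function s ↦ log ∫ |f|^s dμ is differentiable at s₀, with derivative equal to (∫ |f|^{s₀} log|f| dμ) / (∫ |f|^{s₀} dμ), where the integrand |f|^{s₀} log|f| is interpreted as 0 at points where f = 0. -/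
open MeasureTheory Real

/-!
For `s` near `s₀` the derivative `|f|^s log |f|` of the integrand is bounded uniformly: on
`{|f| ≤ 1}` by `(s₀/2)⁻¹`, since `a^t |log a| ≤ 1/t` on `(0, 1]`, and on `{1 ≤ |f| ≤ M}` by
`M^(2s₀) log M`. A constant is integrable on a finite measure space, so differentiation under
the integral sign applies; the chain rule for `log` at the positive value `∫ |f|^{s₀}` finishes.
-/

lemma abs_rpow_mul_log_le_inv_of_le_one {a s t : ℝ} (ha : 0 ≤ a) (ha₁ : a ≤ 1) (ht : 0 < t)
    (hts : t ≤ s) : |a ^ s * log a| ≤ t⁻¹ := by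
  rcases ha.eq_or_lt with rfl | ha
  · simp only [zero_rpow (ht.trans_le hts).ne', zero_mul, abs_zero]
    positivity
  calc |a ^ s * log a|
      = a ^ s * |log a| := by rw [abs_mul, abs_of_pos (rpow_pos_of_pos ha s)]
    _ ≤ a ^ t * |log a| :=
      mul_le_mul_of_nonneg_right (rpow_le_rpow_of_exponent_ge ha ha₁ hts) (abs_nonneg _)
    _ = |log a * a ^ t| := by rw [abs_mul, abs_of_pos (rpow_pos_of_pos ha t), mul_comm]
    _ ≤ t⁻¹ := by simpa using (abs_log_mul_self_rpow_lt a t ha ha₁ ht).le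

lemma abs_rpow_mul_log_le_of_one_le {a s u M : ℝ} (ha : 1 ≤ a) (haM : a ≤ M) (hsu : s ≤ u)
    (hu : 0 ≤ u) : |a ^ s * log a| ≤ M ^ u * log M := by
  rw [abs_mul, abs_of_pos (rpow_pos_of_pos (by linarith) s), abs_of_nonneg (log_nonneg ha)]
  have hpow : a ^ s ≤ M ^ u :=
    (rpow_le_rpow_of_exponent_le ha hsu).trans (rpow_le_rpow (by linarith) haM hu)
  exact mul_le_mul hpow (log_le_log (by linarith) haM) (log_nonneg ha) (rpow_nonneg (by linarith) u)

lemma abs_rpow_mul_log_le {a s t u M : ℝ} (ha : 0 ≤ a) (haM : a ≤ M) (ht : 0 < t)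
    (hts : t ≤ s) (hsu : s ≤ u) : |a ^ s * log a| ≤ t⁻¹ + max M 1 ^ u * log (max M 1) := by
  have hlarge : 0 ≤ max M 1 ^ u * log (max M 1) :=
    mul_nonneg (by positivity) (log_nonneg (le_max_right M 1))
  rcases le_total a 1 with ha₁ | ha₁
  · linarith [abs_rpow_mul_log_le_inv_of_le_one ha ha₁ ht hts]
  · have := abs_rpow_mul_log_le_of_one_le ha₁ (haM.trans (le_max_left M 1)) hsu
      (by linarith)
    linarith [inv_pos.mpr ht]

lemma hasDerivAt_const_rpow_of_nonneg {a s : ℝ} (ha : 0 ≤ a) (hs : 0 < s) :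
    HasDerivAt (fun s => a ^ s) (a ^ s * log a) s := by
  rcases ha.eq_or_lt with rfl | ha
  · have hzero : (fun s : ℝ => (0 : ℝ) ^ s) =ᶠ[nhds s] fun _ => 0 := by
      filter_upwards [lt_mem_nhds hs] with s' hs' using zero_rpow hs'.ne'
    simpa using (hasDerivAt_const s (0 : ℝ)).congr_of_eventuallyEq hzero
  · exact (hasStrictDerivAt_const_rpow ha s).hasDerivAt

lemma hasDerivAt_integral_abs_rpow {X : Type*} [MeasurableSpace X] {μ : Measure X}
    [IsFiniteMeasure μ] {f : X → ℝ} (hf : AEStronglyMeasurable f μ) {M : ℝ}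
    (hbdd : ∀ᵐ x ∂μ, |f x| ≤ M) {s₀ : ℝ} (hs₀ : 0 < s₀) :
    HasDerivAt (fun s => ∫ x, |f x| ^ s ∂μ) (∫ x, |f x| ^ s₀ * log |f x| ∂μ) s₀ := by
  have hmeas : ∀ s : ℝ, 0 ≤ s → AEStronglyMeasurable (fun x => |f x| ^ s) μ := fun s hs =>
    ((continuous_rpow_const hs).comp continuous_abs).comp_aestronglyMeasurable hf
  have hint : Integrable (fun x => |f x| ^ s₀) μ := by
    refine Integrable.of_bound (hmeas s₀ hs₀.le) (M ^ s₀) ?_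
    filter_upwards [hbdd] with x hx
    rw [norm_of_nonneg (by positivity)]
    exact rpow_le_rpow (abs_nonneg _) hx hs₀.le
  have hmeas' : AEStronglyMeasurable (fun x => |f x| ^ s₀ * log |f x|) μ :=
    (hmeas s₀ hs₀.le).mul
      (measurable_log.comp_aemeasurable hf.aemeasurable.abs).aestronglyMeasurable
  refine (hasDerivAt_integral_of_dominated_loc_of_deriv_le (F := fun s x => |f x| ^ s)
    (F' := fun s x => |f x| ^ s * log |f x|)
    (s := Set.Ioo (s₀ / 2) (2 * s₀)) (Ioo_mem_nhds (by linarith) (by linarith))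
    (Filter.eventually_of_mem (lt_mem_nhds hs₀) fun s hs => hmeas s hs.le) hint hmeas' ?_
    (integrable_const ((s₀ / 2)⁻¹ + max M 1 ^ (2 * s₀) * log (max M 1))) ?_).2
  · filter_upwards [hbdd] with x hx s hs
    exact abs_rpow_mul_log_le (abs_nonneg _) hx (by linarith) hs.1.le hs.2.le
  · exact Filter.Eventually.of_forall fun x s hs =>
      hasDerivAt_const_rpow_of_nonneg (abs_nonneg (f x)) (by linarith [hs.1])

theorem stmt_18_general {X : Type*} [MeasurableSpace X] (μ : Measure X) [IsFiniteMeasure μ]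
    (f : X → ℝ) (hf : Measurable f) (M : ℝ)
    (hbdd : ∀ᵐ x ∂μ, |f x| ≤ M)
    (s₀ : ℝ) (hs₀ : 0 < s₀) (hpos : 0 < ∫ x, |f x| ^ s₀ ∂μ) :
    HasDerivAt (fun s : ℝ => Real.log (∫ x, |f x| ^ s ∂μ))
      ((∫ x, |f x| ^ s₀ * Real.log |f x| ∂μ) / (∫ x, |f x| ^ s₀ ∂μ)) s₀ :=
  (hasDerivAt_integral_abs_rpow hf.aestronglyMeasurable hbdd hs₀).log hpos.ne'

/-- On a finite measure space, if `|f| ≤ M` a.e. (`M > 0`) and `∫ |f|^{s₀} dμ > 0` for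
some `s₀ > 0`, then `s ↦ log ∫ |f|^s dμ` is differentiable at `s₀` with derivative
`(∫ |f|^{s₀} log |f| dμ) / (∫ |f|^{s₀} dμ)`. -/
theorem stmt_18 {X : Type*} [MeasurableSpace X] (μ : Measure X) [IsFiniteMeasure μ]
    (f : X → ℝ) (hf : Measurable f) (M : ℝ) (hM : 0 < M)
    (hbdd : ∀ᵐ x ∂μ, |f x| ≤ M)
    (s₀ : ℝ) (hs₀ : 0 < s₀) (hpos : 0 < ∫ x, |f x| ^ s₀ ∂μ) :
    HasDerivAt (fun s : ℝ => Real.log (∫ x, |f x| ^ s ∂μ))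
      ((∫ x, |f x| ^ s₀ * Real.log |f x| ∂μ) / (∫ x, |f x| ^ s₀ ∂μ)) s₀ :=
  stmt_18_general μ f hf M hbdd s₀ hs₀ hpos
end
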